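/- Let ν ∈ ℝ, a > 0, m ∈ ℕ, λ = (ν + 2m)/a with λ > -1, and let f⁻_l(r) = (2^{λ+1} l! / (a^λ Γ(λ + l + 1)))^{1/2} r^{-(ν + m)} L_l^{(λ)}((2/a) r^{-a}) e^{-(1/a) r^{-a}}. Then for every l ∈ ℕ and r > 0, -(i/2)( ((ν - a)/(-a)) f⁻_l(r) + (2/(-a)) r (f⁻_l)'(r) ) - (1/2)·(i/(-a)) r^{-a} f⁻_l(r) - (1/2)·(i/(-a)) r^{a}( r² (f⁻_l)''(r) + (ν + 1) r (f⁻_l)'(r) - m(ν + m) f⁻_l(r) ) = -i √((l + 1)(λ + l + 1)) · f⁻_{l+1}(r); that is, the operator π_{-a}(𝐧⁻) sends f⁻_l to -i √((l+1)(λ+l+1)) f⁻_{l+1}. -/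

import Mathlib

open Real Complex

/-- The generalized Laguerre polynomial
`L_l^{(λ)}(t) = ∑_{j=0}^{l} ((-1)^j / (j!(l-j)!)) (Γ(λ+l+1)/Γ(λ+j+1)) t^j`. -/
noncomputable def laguerre (lam : ℝ) (l : ℕ) (t : ℝ) : ℝ :=
  ∑ j ∈ Finset.range (l + 1),
    (-1 : ℝ) ^ j / (j.factorial * (l - j).factorial) *
      (Real.Gamma (lam + l + 1) / Real.Gamma (lam + j + 1)) * t ^ j

/-- `f⁻_l(r) = (2^{λ+1} l!/(a^λ Γ(λ+l+1)))^{1/2} r^{-(ν+m)} L_l^{(λ)}((2/a) r^{-a})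
e^{-(1/a) r^{-a}}`. -/
noncomputable def laguerreFunNeg (ν a : ℝ) (m : ℕ) (l : ℕ) (r : ℝ) : ℂ :=
  ((Real.sqrt ((2 : ℝ) ^ ((ν + 2 * m) / a + 1) * l.factorial /
        (a ^ ((ν + 2 * m) / a) * Real.Gamma ((ν + 2 * m) / a + l + 1))) *
      r ^ (-(ν + m)) * laguerre ((ν + 2 * m) / a) l ((2 / a) * r ^ (-a)) *
      Real.exp (-(1 / a) * r ^ (-a)) : ℝ) : ℂ)

/-!
Write `t = (2/a) r^{-a}`, so that `f⁻_l(r) = c_l r^{-(ν+m)} L_l^{(λ)}(t) e^{-t/2}`. The Euler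
operator `r d/dr` acts on functions of `t` as `-a t d/dt`, and the zeroth-order terms cancel
because `b = -(ν+m)` solves `b² + ν b = m(ν+m)`. Hence
`π_{-a}(𝐧⁻) f⁻_l = i c_l r^{-(ν+m)} e^{-t/2} (D L_l^{(λ)})(t)` with
`D = t ∂² + (λ+1-2t) ∂ + (t-λ-1)`. The explicit coefficients give the Laguerre equation
`t L'' + (λ+1-t) L' + l L = 0` and the contiguous relation
`(l+1) L_{l+1} - t L_{l+1}' = (λ+l+1) L_l`; eliminating `L_l` between them gives
`D L_l^{(λ)} = -(l+1) L_{l+1}^{(λ)}`. Finally `√((l+1)(λ+l+1)) c_{l+1} = (l+1) c_l`.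
-/

open Polynomial

noncomputable def laguerreCoeff (lam : ℝ) (l j : ℕ) : ℝ :=
  (-1 : ℝ) ^ j / (j.factorial * (l - j).factorial) *
    (Real.Gamma (lam + l + 1) / Real.Gamma (lam + j + 1))

noncomputable def laguerrePoly (lam : ℝ) (l : ℕ) : ℝ[X] :=
  ∑ j ∈ Finset.range (l + 1), C (laguerreCoeff lam l j) * X ^ j

lemma laguerre_eq_eval (lam : ℝ) (l : ℕ) (t : ℝ) :
    laguerre lam l t = (laguerrePoly lam l).eval t := by
  simp [laguerre, laguerrePoly, laguerreCoeff, eval_finsetSum]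

lemma coeff_laguerrePoly (lam : ℝ) (l n : ℕ) :
    (laguerrePoly lam l).coeff n = if n ≤ l then laguerreCoeff lam l n else 0 := by
  simp [laguerrePoly, finsetSum_coeff]

lemma Gamma_add_natCast_succ_add_one {lam : ℝ} (hlam : -1 < lam) (n : ℕ) :
    Real.Gamma (lam + (n + 1 : ℕ) + 1) = (lam + n + 1) * Real.Gamma (lam + n + 1) := by
  rw [Nat.cast_succ, ← add_assoc, Real.Gamma_add_one]
  have : (0 : ℝ) ≤ n := n.cast_nonneg
  linarith

lemma laguerrePoly_coeff_recurrence {lam : ℝ} (hlam : -1 < lam) (l n : ℕ) :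
    ((n : ℝ) + 1) * (lam + n + 1) * (laguerrePoly lam l).coeff (n + 1) =
      ((n : ℝ) - l) * (laguerrePoly lam l).coeff n := by
  rw [coeff_laguerrePoly, coeff_laguerrePoly]
  rcases lt_trichotomy n l with hn | rfl | hn
  · obtain ⟨k, rfl⟩ := Nat.exists_eq_add_of_lt hn
    rw [if_pos (by omega : n + 1 ≤ n + k + 1), if_pos (by omega : n ≤ n + k + 1),
      laguerreCoeff, laguerreCoeff, show n + k + 1 - (n + 1) = k by omega,
      show n + k + 1 - n = k + 1 by omega, Gamma_add_natCast_succ_add_one hlam n,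
      Nat.factorial_succ, Nat.factorial_succ]
    have : lam + n + 1 ≠ 0 := by have : (0 : ℝ) ≤ n := n.cast_nonneg; linarith
    push_cast
    field_simp
    ring
  · simp
  · rw [if_neg (by omega), if_neg (by omega), mul_zero, mul_zero]

lemma laguerrePoly_coeff_degree_recurrence {lam : ℝ} (hlam : -1 < lam) (l n : ℕ) :
    ((l : ℝ) + 1 - n) * (laguerrePoly lam (l + 1)).coeff n =
      (lam + l + 1) * (laguerrePoly lam l).coeff n := by
  rw [coeff_laguerrePoly, coeff_laguerrePoly]
  rcases lt_trichotomy n (l + 1) with hn | rfl | hn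
  · obtain ⟨k, rfl⟩ := Nat.exists_eq_add_of_le (Nat.lt_succ_iff.mp hn)
    rw [if_pos hn.le, if_pos (Nat.lt_succ_iff.mp hn), laguerreCoeff, laguerreCoeff,
      show n + k + 1 - n = k + 1 by omega, show n + k - n = k by omega,
      Gamma_add_natCast_succ_add_one hlam, Nat.factorial_succ]
    push_cast
    field_simp
    ring
  · simp
  · rw [if_neg (by omega), if_neg (by omega), mul_zero, mul_zero]

lemma coeff_X_mul_derivative {R : Type*} [Semiring R] (p : R[X]) (n : ℕ) :
    (X * derivative p).coeff n = n * p.coeff n := by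
  cases n with
  | zero => simp
  | succ n => rw [coeff_X_mul, coeff_derivative, ← Nat.cast_succ, Nat.cast_comm]

lemma laguerrePoly_ode {lam : ℝ} (hlam : -1 < lam) (l : ℕ) :
    X * derivative (derivative (laguerrePoly lam l)) +
        (C (lam + 1) - X) * derivative (laguerrePoly lam l) + C (l : ℝ) * laguerrePoly lam l =
      0 := by
  ext n
  simp only [coeff_add, sub_mul, coeff_sub, coeff_C_mul, coeff_X_mul_derivative, coeff_derivative,
    coeff_zero]
  linear_combination laguerrePoly_coeff_recurrence hlam l n

lemma laguerrePoly_contiguous {lam : ℝ} (hlam : -1 < lam) (l : ℕ) :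
    C ((l : ℝ) + 1) * laguerrePoly lam (l + 1) - X * derivative (laguerrePoly lam (l + 1)) =
      C (lam + l + 1) * laguerrePoly lam l := by
  ext n
  simp only [coeff_sub, coeff_C_mul, coeff_X_mul_derivative]
  linear_combination laguerrePoly_coeff_degree_recurrence hlam l n

lemma laguerrePoly_lowering {lam : ℝ} (hlam : -1 < lam) (l : ℕ) :
    X * derivative (derivative (laguerrePoly lam l)) +
        (C (lam + 1) - 2 * X) * derivative (laguerrePoly lam l) +
        (X - C (lam + 1)) * laguerrePoly lam l = -C ((l : ℝ) + 1) * laguerrePoly lam (l + 1) := by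
  have hc : C (lam + l + 1) ≠ 0 := by
    have : (0 : ℝ) ≤ l := l.cast_nonneg
    exact C_ne_zero.mpr (by linarith)
  have ode := laguerrePoly_ode hlam l
  have ode_succ := laguerrePoly_ode hlam (l + 1)
  have contiguous := laguerrePoly_contiguous hlam l
  have contiguous' := congrArg derivative contiguous
  simp only [derivative_sub, derivative_mul, derivative_C, derivative_X, zero_mul, zero_add,
    one_mul] at contiguous'
  simp only [map_add, map_one, map_natCast, Nat.cast_succ] at *
  refine mul_left_cancel₀ hc ?_
  linear_combination (C lam + l + 1) * ode + X * ode_succ + X * contiguous' -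
    (X - (C lam + l + 1)) * contiguous

noncomputable def polyExpDecay (p : ℝ[X]) (t : ℝ) : ℝ := p.eval t * Real.exp (-(t / 2))

noncomputable def decayDerivative (p : ℝ[X]) : ℝ[X] := derivative p - C (1 / 2) * p

lemma hasDerivAt_polyExpDecay (p : ℝ[X]) (t : ℝ) :
    HasDerivAt (polyExpDecay p) (polyExpDecay (decayDerivative p) t) t := by
  refine (p.hasDerivAt t).mul ((((hasDerivAt_id t).div_const 2).neg).exp) |>.congr_deriv ?_
  simp only [polyExpDecay, decayDerivative, eval_sub, eval_mul, eval_C, Pi.neg_apply, id]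
  ring

lemma polyExpDecay_laguerrePoly_lowering {lam : ℝ} (hlam : -1 < lam) (l : ℕ) (t : ℝ) :
    let P := laguerrePoly lam l
    2 * t * polyExpDecay (decayDerivative (decayDerivative P)) t +
        2 * (lam + 1) * polyExpDecay (decayDerivative P) t -
        2 * t * polyExpDecay (decayDerivative P) t - (lam + 1) * polyExpDecay P t +
        t * polyExpDecay P t / 2 =
      -2 * ((l : ℝ) + 1) * polyExpDecay (laguerrePoly lam (l + 1)) t := by
  intro P
  have E := congrArg (eval t) (laguerrePoly_lowering hlam l)
  simp only [eval_add, eval_sub, eval_mul, eval_neg, eval_C, eval_X, eval_ofNat] at E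
  simp only [polyExpDecay, decayDerivative, derivative_sub, derivative_mul, derivative_C, zero_mul,
    zero_add, eval_sub, eval_mul, eval_C]
  linear_combination 2 * Real.exp (-(t / 2)) * E

noncomputable def laguerreNorm (a lam : ℝ) (k : ℕ) : ℝ :=
  √((2 : ℝ) ^ (lam + 1) * k.factorial / (a ^ lam * Real.Gamma (lam + k + 1)))

lemma sqrt_mul_laguerreNorm_succ {lam : ℝ} (hlam : -1 < lam) (a : ℝ) (l : ℕ) :
    √(((l : ℝ) + 1) * (lam + l + 1)) * laguerreNorm a lam (l + 1) =
      ((l : ℝ) + 1) * laguerreNorm a lam l := by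
  have hl : (0 : ℝ) ≤ l := l.cast_nonneg
  have hc : 0 < lam + l + 1 := by linarith
  rw [laguerreNorm, laguerreNorm, ← Real.sqrt_mul (by positivity),
    ← Real.sqrt_sq (by positivity : (0 : ℝ) ≤ l + 1), ← Real.sqrt_mul (by positivity),
    Real.sqrt_sq (by positivity), Nat.factorial_succ, Gamma_add_natCast_succ_add_one hlam]
  congr 1
  push_cast
  field_simp

lemma deriv_ofReal_comp (g : ℝ → ℝ) :
    deriv (fun x => (g x : ℂ)) = fun x => ((deriv g x : ℝ) : ℂ) := by
  funext x
  by_cases hg : DifferentiableAt ℝ g x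
  · exact hg.hasDerivAt.ofReal_comp.deriv
  · have hc : ¬DifferentiableAt ℝ (fun x => (g x : ℂ)) x := fun hc =>
      hg (by simpa [Function.comp_def] using Complex.reCLM.differentiableAt.comp x hc)
    rw [deriv_zero_of_not_differentiableAt hg, deriv_zero_of_not_differentiableAt hc,
      Complex.ofReal_zero]

lemma hasDerivAt_rpow_mul_comp_rpow_neg {a b κ r d : ℝ} {h : ℝ → ℝ} (hr : 0 < r)
    (hh : HasDerivAt h d (κ * r ^ (-a))) :
    HasDerivAt (fun x => x ^ b * h (κ * x ^ (-a)))
      (r ^ (b - 1) * (b * h (κ * r ^ (-a)) - a * (κ * r ^ (-a)) * d)) r := by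
  have hb := Real.hasDerivAt_rpow_const (p := b) (Or.inl hr.ne')
  have ha := (Real.hasDerivAt_rpow_const (p := -a) (Or.inl hr.ne')).const_mul κ
  refine (hb.mul (hh.comp r ha)).congr_deriv ?_
  rw [Function.comp_apply, Real.rpow_sub_one hr.ne', Real.rpow_sub_one hr.ne']
  field_simp
  ring

lemma radialOperator_eq {ν a m r t : ℝ} {F h h' h'' : ℝ → ℝ} (ha : a ≠ 0) (hr : 0 < r)
    (hF : F = fun x => x ^ (-(ν + m)) * h (2 / a * x ^ (-a))) (ht : t = 2 / a * r ^ (-a))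
    (hh : ∀ t, HasDerivAt h (h' t) t) (hh' : ∀ t, HasDerivAt h' (h'' t) t) :
    (ν - a) * F r + 2 * r * deriv F r + r ^ (-a) * F r +
        r ^ a * (r ^ 2 * deriv (deriv F) r + (ν + 1) * r * deriv F r - m * (ν + m) * F r) =
      a * r ^ (-(ν + m)) * (2 * t * h'' t + 2 * ((ν + 2 * m) / a + 1) * h' t - 2 * t * h' t -
        ((ν + 2 * m) / a + 1) * h t + t * h t / 2) := by
  subst hF
  set b := -(ν + m)
  have hderiv : ∀ x, 0 < x → HasDerivAt (fun x => x ^ b * h (2 / a * x ^ (-a)))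
      (x ^ (b - 1) *
        (b * h (2 / a * x ^ (-a)) - a * (2 / a * x ^ (-a)) * h' (2 / a * x ^ (-a)))) x :=
    fun x hx => hasDerivAt_rpow_mul_comp_rpow_neg hx (hh _)
  have hderiv' : HasDerivAt (deriv fun x => x ^ b * h (2 / a * x ^ (-a)))
      (r ^ (b - 1 - 1) * ((b - 1) * (b * h t - a * t * h' t) -
        a * t * (b * h' t - a * (h' t + t * h'' t)))) r := by
    have hk : HasDerivAt (fun s => b * h s - a * s * h' s) (b * h' t - a * (h' t + t * h'' t)) t :=
      (((hh t).const_mul b).sub (((hasDerivAt_id t).const_mul a).mul (hh' t))).congr_deriv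
        (by simp only [id]; ring)
    subst ht
    refine (hasDerivAt_rpow_mul_comp_rpow_neg hr hk).congr_of_eventuallyEq ?_
    filter_upwards [Ioi_mem_nhds hr] with x hx
    exact (hderiv x hx).deriv
  rw [(hderiv r hr).deriv, hderiv'.deriv, ← ht]
  have hs : 0 < r ^ (-a) := Real.rpow_pos_of_pos hr _
  rw [Real.rpow_sub_one hr.ne', Real.rpow_sub_one hr.ne', Real.rpow_sub_one hr.ne',
    show r ^ a = (r ^ (-a))⁻¹ by rw [Real.rpow_neg hr.le, inv_inv], ht]
  field_simp
  ring

noncomputable def laguerreFunNegReal (ν a : ℝ) (m l : ℕ) (r : ℝ) : ℝ :=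
  r ^ (-(ν + m)) * (laguerreNorm a ((ν + 2 * m) / a) l *
    polyExpDecay (laguerrePoly ((ν + 2 * m) / a) l) (2 / a * r ^ (-a)))

lemma laguerreFunNeg_eq_ofReal (ν a : ℝ) (m l : ℕ) :
    laguerreFunNeg ν a m l = fun r => (laguerreFunNegReal ν a m l r : ℂ) := by
  funext r
  rw [laguerreFunNeg, laguerreFunNegReal, laguerre_eq_eval, laguerreNorm, polyExpDecay,
    show -(1 / a) * r ^ (-a) = -(2 / a * r ^ (-a) / 2) by ring]
  push_cast
  ring

lemma radialOperator_laguerreFunNegReal {ν a : ℝ} (ha : a ≠ 0) {m : ℕ}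
    (hlam : -1 < (ν + 2 * m) / a) (l : ℕ) {r : ℝ} (hr : 0 < r) :
    let f := laguerreFunNegReal ν a m l
    (ν - a) * f r + 2 * r * deriv f r + r ^ (-a) * f r +
        r ^ a * (r ^ 2 * deriv (deriv f) r + (ν + 1) * r * deriv f r - m * (ν + m) * f r) =
      -2 * a * √((l + 1) * ((ν + 2 * m) / a + l + 1)) * laguerreFunNegReal ν a m (l + 1) r := by
  intro f
  set lam := (ν + 2 * m) / a
  set c := laguerreNorm a lam l
  set P := laguerrePoly lam l
  rw [radialOperator_eq (F := f) (ν := ν) (m := m) ha hr rfl rfl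
    (fun t => (hasDerivAt_polyExpDecay P t).const_mul c)
    (fun t => (hasDerivAt_polyExpDecay (decayDerivative P) t).const_mul c)]
  have lowering := polyExpDecay_laguerrePoly_lowering hlam l (2 / a * r ^ (-a))
  have norm := sqrt_mul_laguerreNorm_succ hlam a l
  simp only [laguerreFunNegReal]
  linear_combination a * r ^ (-(ν + m)) * c * lowering +
    2 * a * r ^ (-(ν + m)) * polyExpDecay (laguerrePoly lam (l + 1)) (2 / a * r ^ (-a)) * norm

/-- The operator `π_{-a}(𝐧⁻) = -(i/2) H_{-a} - (1/2) E⁺_{-a} - (1/2) E⁻_{-a,m}` sends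
`f⁻_l` to `-i √((l+1)(λ+l+1)) f⁻_{l+1}`, where `λ = (ν + 2m)/a`. -/
theorem laguerreFunNeg_lowering (ν a : ℝ) (ha : 0 < a) (m : ℕ)
    (hlam : -1 < (ν + 2 * m) / a) (l : ℕ) (r : ℝ) (hr : 0 < r) :
    -(Complex.I / 2) *
        ((((ν : ℂ) - a) / (-a : ℂ)) * laguerreFunNeg ν a m l r +
          2 / (-a : ℂ) * (r : ℂ) * deriv (laguerreFunNeg ν a m l) r) -
      (1 / 2 : ℂ) * (Complex.I / (-a : ℂ)) * ((r ^ (-a) : ℝ) : ℂ) *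
        laguerreFunNeg ν a m l r -
      (1 / 2 : ℂ) * (Complex.I / (-a : ℂ)) * ((r ^ a : ℝ) : ℂ) *
        ((r : ℂ) ^ 2 * deriv (deriv (laguerreFunNeg ν a m l)) r +
          ((ν : ℂ) + 1) * (r : ℂ) * deriv (laguerreFunNeg ν a m l) r -
          (m : ℂ) * ((ν : ℂ) + (m : ℂ)) * laguerreFunNeg ν a m l r)
      = -Complex.I *
          (Real.sqrt ((l + 1) * ((ν + 2 * m) / a + l + 1)) : ℝ) *
          laguerreFunNeg ν a m (l + 1) r := by
  have key := congrArg (fun x : ℝ => (x : ℂ))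
    (radialOperator_laguerreFunNegReal ha.ne' hlam l hr)
  have ha' : (a : ℂ) ≠ 0 := by exact_mod_cast ha.ne'
  simp only [laguerreFunNeg_eq_ofReal, deriv_ofReal_comp]
  push_cast at key ⊢
  linear_combination (norm := skip) I / (2 * a) * key
  field_simp
  ring
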